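/- arXiv:2409.09620 — 6 statements merged into one kernel-verified Lean document; each statement's English description precedes it below -/
import Mathlib

section
/- Let K be a triangle with vertices v1, v2, v3, with edge e_i opposite vertex v_i of length l_i, and suppose l1 ≥ l2 ≥ l3. For any affine polynomial p on ℝ² the identity (1/|K|)∬_K p = Σ_{i=1}^3 (w_i / l_i)∫_{e_i} p ds + ω1 · p(ξ) holds, where w_i = 2 l_i / (3 l1 + 3 l2), ω1 = (l1 + l2 − 2 l3)/(3 l1 + 3 l2), and ξ = ((l1 − l3) v1 + (l2 − l3) v2)/(l1 + l2 − 2 l3) (the last term is interpreted as 0 when l1 = l2 = l3). -/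
open MeasureTheory Set intervalIntegral

section helpers

-- ∫ t in 0..u of a quadratic polynomial
lemma intpoly (u c0 c1 c2 : ℝ) :
    ∫ t in (0:ℝ)..u, (c0 + c1 * t + c2 * t ^ 2) = c0 * u + c1 * u ^ 2 / 2 + c2 * u ^ 3 / 3 := by
  have h0 : IntervalIntegrable (fun t : ℝ => c0 + c1 * t) volume 0 u :=
    Continuous.intervalIntegrable (by continuity) _ _
  have h1 : IntervalIntegrable (fun t : ℝ => c2 * t ^ 2) volume 0 u :=
    Continuous.intervalIntegrable (by continuity) _ _
  have h2 : IntervalIntegrable (fun _ : ℝ => c0) volume 0 u :=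
    Continuous.intervalIntegrable (by continuity) _ _
  have h3 : IntervalIntegrable (fun t : ℝ => c1 * t) volume 0 u :=
    Continuous.intervalIntegrable (by continuity) _ _
  rw [intervalIntegral.integral_add h0 h1, intervalIntegral.integral_add h2 h3,
    intervalIntegral.integral_const, intervalIntegral.integral_const_mul,
    intervalIntegral.integral_const_mul, integral_id, integral_pow]
  simp only [smul_eq_mul]
  ring

lemma simplex_integral (A B C : ℝ) :
    ∫ p in {p : ℝ × ℝ | 0 ≤ p.1 ∧ 0 ≤ p.2 ∧ p.1 + p.2 ≤ 1}, (A + B * p.1 + C * p.2)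
      = A / 2 + B / 6 + C / 6 := by
  set S : Set (ℝ × ℝ) := {p : ℝ × ℝ | 0 ≤ p.1 ∧ 0 ≤ p.2 ∧ p.1 + p.2 ≤ 1} with hS
  have hSm : MeasurableSet S := by
    apply MeasurableSet.inter (measurableSet_le measurable_const measurable_fst)
    exact MeasurableSet.inter (measurableSet_le measurable_const measurable_snd)
      (measurableSet_le (measurable_fst.add measurable_snd) measurable_const)
  have hScl : IsClosed S := by
    apply IsClosed.inter (isClosed_le continuous_const continuous_fst)
    exact IsClosed.inter (isClosed_le continuous_const continuous_snd)
      (isClosed_le (continuous_fst.add continuous_snd) continuous_const)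
  have hSsub : S ⊆ Icc ((0:ℝ),(0:ℝ)) (1,1) := by
    rintro ⟨x, y⟩ ⟨hx, hy, hxy⟩
    constructor <;> constructor <;> simp_all <;> linarith
  have hScomp : IsCompact S := (isCompact_Icc).of_isClosed_subset hScl hSsub
  set f : ℝ × ℝ → ℝ := fun p => A + B * p.1 + C * p.2 with hf
  have hfc : Continuous f := by continuity
  have hInt : IntegrableOn f S volume := hfc.continuousOn.integrableOn_compact hScomp
  rw [← MeasureTheory.integral_indicator hSm]
  rw [Measure.volume_eq_prod]
  rw [MeasureTheory.integral_prod]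
  swap
  · rw [← Measure.volume_eq_prod]
    exact (integrable_indicator_iff hSm).2 hInt
  have key : ∀ x : ℝ, (∫ y : ℝ, S.indicator f (x, y))
      = (Icc (0:ℝ) 1).indicator (fun x => (A + B * x) * (1 - x) + C * (1 - x) ^ 2 / 2) x := by
    intro x
    by_cases hx : x ∈ Icc (0:ℝ) 1
    · rw [indicator_of_mem hx]
      have h1 : (fun y => S.indicator f (x, y))
          = (Icc (0:ℝ) (1 - x)).indicator (fun y => (A + B * x) + C * y) := by
        funext y
        by_cases hy : y ∈ Icc (0:ℝ) (1 - x)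
        · rw [indicator_of_mem hy,
            indicator_of_mem (show (x, y) ∈ S from ⟨hx.1, hy.1, by have := hy.2; simp; linarith⟩)]
        · rw [indicator_of_notMem hy, indicator_of_notMem]
          rintro ⟨h1, h2, h3⟩
          exact hy ⟨h2, by simp at h3 ⊢; linarith⟩
      rw [h1, MeasureTheory.integral_indicator measurableSet_Icc, integral_Icc_eq_integral_Ioc,
        ← intervalIntegral.integral_of_le (by linarith [hx.2] : (0:ℝ) ≤ 1 - x)]
      have := intpoly (1 - x) (A + B * x) C 0
      simp only [zero_mul, add_zero, zero_div] at this
      rw [show (fun y => (A + B * x) + C * y) = (fun y => (A + B * x) + C * y + 0 * y ^ 2) by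
        funext y; ring]
      rw [intpoly (1 - x) (A + B * x) C 0]
      ring
    · rw [indicator_of_notMem hx]
      have : ∀ y : ℝ, S.indicator f (x, y) = 0 := by
        intro y
        apply indicator_of_notMem
        rintro ⟨h1, h2, h3⟩
        simp at h3 hx
        rcases hx h1 with h
        linarith
      simp [this]
  rw [show (fun x => ∫ y : ℝ, S.indicator f (x, y)) = fun x =>
      (Icc (0:ℝ) 1).indicator (fun x => (A + B * x) * (1 - x) + C * (1 - x) ^ 2 / 2) x
    from funext key]
  rw [MeasureTheory.integral_indicator measurableSet_Icc, integral_Icc_eq_integral_Ioc,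
    ← intervalIntegral.integral_of_le (zero_le_one)]
  rw [show (fun x : ℝ => (A + B * x) * (1 - x) + C * (1 - x) ^ 2 / 2)
      = (fun x : ℝ => (A + C / 2) + (B - A - C) * x + (C / 2 - B) * x ^ 2) by
    funext x; ring]
  rw [intpoly 1 (A + C / 2) (B - A - C) (C / 2 - B)]
  ring

end helpers

/-- Optimal P1 convex decomposition identity on a triangle: for any affine
polynomial `p(x,y) = a + bx + cy`,
`(1/|K|)∬_K p = Σᵢ (wᵢ/lᵢ)∫_{eᵢ} p ds + ω1 p(ξ)`, where `eᵢ` is the edge opposite `vᵢ`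
(parametrized over `[0,1]`, so `(wᵢ/lᵢ)∫_{eᵢ} p ds = wᵢ ∫₀¹ p(edge(t)) dt`),
`wᵢ = 2lᵢ/(3l1+3l2)`, `ω1 = (l1+l2-2l3)/(3l1+3l2)` and
`ξ = ((l1-l3)v1+(l2-l3)v2)/(l1+l2-2l3)` (the last term vanishes when `l1=l2=l3` since
then `ω1 = 0`). -/
theorem stmt2 (v1 v2 v3 : ℝ × ℝ) (hind : AffineIndependent ℝ ![v1, v2, v3])
    (l1 l2 l3 : ℝ)
    (hl1 : l1 = dist v2 v3) (hl2 : l2 = dist v1 v3) (hl3 : l3 = dist v1 v2)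
    (h12 : l2 ≤ l1) (h23 : l3 ≤ l2) (h3 : 0 < l3)
    (a b c : ℝ) :
    (1 / (volume (convexHull ℝ ({v1, v2, v3} : Set (ℝ × ℝ)))).toReal) *
        ∫ q in convexHull ℝ ({v1, v2, v3} : Set (ℝ × ℝ)), (a + b * q.1 + c * q.2) =
      (2 * l1 / (3 * l1 + 3 * l2)) *
        (∫ t in (0:ℝ)..1, (a + b * ((1 - t) • v2 + t • v3).1 + c * ((1 - t) • v2 + t • v3).2))
      + (2 * l2 / (3 * l1 + 3 * l2)) *
        (∫ t in (0:ℝ)..1, (a + b * ((1 - t) • v1 + t • v3).1 + c * ((1 - t) • v1 + t • v3).2))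
      + (2 * l3 / (3 * l1 + 3 * l2)) *
        (∫ t in (0:ℝ)..1, (a + b * ((1 - t) • v1 + t • v2).1 + c * ((1 - t) • v1 + t • v2).2))
      + ((l1 + l2 - 2 * l3) / (3 * l1 + 3 * l2)) *
        (a + b * ((l1 + l2 - 2 * l3)⁻¹ • ((l1 - l3) • v1 + (l2 - l3) • v2)).1
           + c * ((l1 + l2 - 2 * l3)⁻¹ • ((l1 - l3) • v1 + (l2 - l3) • v2)).2) := by
  -- abbreviations
  set K : Set (ℝ × ℝ) := convexHull ℝ ({v1, v2, v3} : Set (ℝ × ℝ)) with hK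
  set S : Set (ℝ × ℝ) := {p : ℝ × ℝ | 0 ≤ p.1 ∧ 0 ≤ p.2 ∧ p.1 + p.2 ≤ 1} with hS
  set M : Matrix (Fin 2) (Fin 2) ℝ :=
    !![v2.1 - v1.1, v3.1 - v1.1; v2.2 - v1.2, v3.2 - v1.2] with hM
  set d : ℝ := (v2.1 - v1.1) * (v3.2 - v1.2) - (v3.1 - v1.1) * (v2.2 - v1.2) with hdd
  set L : (ℝ × ℝ) →L[ℝ] (ℝ × ℝ) :=
    LinearMap.toContinuousLinearMap
      (Matrix.toLin (Module.Basis.finTwoProd ℝ) (Module.Basis.finTwoProd ℝ) M) with hL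
  set f : ℝ × ℝ → ℝ × ℝ := fun p => v1 + L p with hfdef
  have hMdet : M.det = d := by rw [hM, Matrix.det_fin_two_of]
  have hLapp : ∀ p : ℝ × ℝ,
      L p = ((v2.1 - v1.1) * p.1 + (v3.1 - v1.1) * p.2,
             (v2.2 - v1.2) * p.1 + (v3.2 - v1.2) * p.2) := by
    intro p
    rw [hL, hM]
    simp [Matrix.toLin_finTwoProd_apply]
  have hLdet : L.det = d := by
    rw [hL]
    simp only [LinearMap.det_toContinuousLinearMap, LinearMap.det_toLin, hMdet]
  -- nonzero determinant
  have hv12 : v1 ≠ v2 := by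
    intro h
    rw [h] at hl3
    simp [dist_self] at hl3
    linarith
  have hd : d ≠ 0 := by
    intro h0
    apply affineIndependent_iff_not_collinear_set.1 hind
    rw [collinear_iff_of_mem (Set.mem_insert v1 {v2, v3})]
    refine ⟨v2 - v1, ?_⟩
    rintro p (rfl | rfl | hp3)
    · exact ⟨0, by simp⟩
    · exact ⟨1, by simp⟩
    rw [hp3]
    by_cases hu1 : v2.1 - v1.1 ≠ 0
    · refine ⟨(v3.1 - v1.1) / (v2.1 - v1.1), ?_⟩
      have h2 : (v2.1 - v1.1) * (v3.2 - v1.2) = (v3.1 - v1.1) * (v2.2 - v1.2) := by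
        rw [hdd] at h0; linarith
      apply Prod.ext
      · simp only [vadd_eq_add, Prod.fst_add, Prod.smul_fst, Prod.fst_sub, smul_eq_mul]
        field_simp
        all_goals ring
      · simp only [vadd_eq_add, Prod.snd_add, Prod.smul_snd, Prod.snd_sub, smul_eq_mul]
        field_simp
        all_goals linear_combination h2
    · push_neg at hu1
      have hu : v2 - v1 ≠ 0 := sub_ne_zero.2 (Ne.symm hv12)
      have hu2 : v2.2 - v1.2 ≠ 0 := by
        intro h2
        apply hu
        have : v2 - v1 = (v2.1 - v1.1, v2.2 - v1.2) := rfl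
        rw [this, hu1, h2]
        rfl
      refine ⟨(v3.2 - v1.2) / (v2.2 - v1.2), ?_⟩
      have h2 : (v2.1 - v1.1) * (v3.2 - v1.2) = (v3.1 - v1.1) * (v2.2 - v1.2) := by
        rw [hdd] at h0; linarith
      apply Prod.ext
      · simp only [vadd_eq_add, Prod.fst_add, Prod.smul_fst, Prod.fst_sub, smul_eq_mul]
        field_simp
        all_goals linear_combination -h2
      · simp only [vadd_eq_add, Prod.snd_add, Prod.smul_snd, Prod.snd_sub, smul_eq_mul]
        field_simp
        all_goals ring
  have habs : |d| ≠ 0 := abs_ne_zero.2 hd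
  have hSm : MeasurableSet S := by
    apply MeasurableSet.inter (measurableSet_le measurable_const measurable_fst)
    exact MeasurableSet.inter (measurableSet_le measurable_const measurable_snd)
      (measurableSet_le (measurable_fst.add measurable_snd) measurable_const)
  have hSconv : Convex ℝ S := by
    rintro p hp q hq α β hα hβ hαβ
    obtain ⟨hp1, hp2, hp3⟩ := hp
    obtain ⟨hq1, hq2, hq3⟩ := hq
    refine ⟨?_, ?_, ?_⟩
    · show (0:ℝ) ≤ (α • p + β • q).1
      simp only [Prod.fst_add, Prod.smul_fst, smul_eq_mul]
      have := mul_nonneg hα hp1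
      have := mul_nonneg hβ hq1
      linarith
    · show (0:ℝ) ≤ (α • p + β • q).2
      simp only [Prod.snd_add, Prod.smul_snd, smul_eq_mul]
      have := mul_nonneg hα hp2
      have := mul_nonneg hβ hq2
      linarith
    · show (α • p + β • q).1 + (α • p + β • q).2 ≤ 1
      simp only [Prod.fst_add, Prod.snd_add, Prod.smul_fst, Prod.smul_snd, smul_eq_mul]
      have h1 : α * (p.1 + p.2) ≤ α * 1 := mul_le_mul_of_nonneg_left hp3 hα
      have h2 : β * (q.1 + q.2) ≤ β * 1 := mul_le_mul_of_nonneg_left hq3 hβ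
      nlinarith
  have hDeriv : ∀ x ∈ S, HasFDerivWithinAt f L S x := fun x _ =>
    ((L.hasFDerivAt.const_add v1).hasFDerivWithinAt)
  have hLinj : Function.Injective fun p : ℝ × ℝ => L p := by
    have h1 := (Matrix.toLinearEquiv (Module.Basis.finTwoProd ℝ) M
      (isUnit_iff_ne_zero.2 (by rw [hMdet]; exact hd))).injective
    intro p q hpq
    apply h1
    simpa [Matrix.toLinearEquiv_apply, hL] using hpq
  have hfInj : Set.InjOn f S := by
    intro p _ q _ h
    rw [hfdef] at h
    exact hLinj (add_left_cancel h)
  have hfp : ∀ p : ℝ × ℝ, f p = (1 - p.1 - p.2) • v1 + p.1 • v2 + p.2 • v3 := by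
    intro p
    rw [hfdef]
    show v1 + L p = _
    rw [hLapp]
    apply Prod.ext <;>
      simp only [Prod.fst_add, Prod.snd_add, Prod.smul_fst, Prod.smul_snd, smul_eq_mul] <;> ring
  have hImage : K = f '' S := by
    apply Set.Subset.antisymm
    · apply convexHull_min
      · rintro x (rfl | rfl | rfl)
        · exact ⟨(0, 0), ⟨by norm_num, by norm_num, by norm_num⟩, by rw [hfp]; simp⟩
        · exact ⟨(1, 0), ⟨by norm_num, by norm_num, by norm_num⟩, by rw [hfp]; norm_num⟩
        · exact ⟨(0, 1), ⟨by norm_num, by norm_num, by norm_num⟩, by rw [hfp]; norm_num⟩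
      · have himg : f '' S = (fun x => v1 + x) '' ((fun p => L p) '' S) := by
          rw [← Set.image_comp]; rfl
        rw [himg]
        apply Convex.translate
        exact hSconv.is_linear_image ⟨fun x y => map_add L x y, fun r x => map_smul L r x⟩
    · rintro x ⟨p, hp, rfl⟩
      rw [hfp]
      obtain ⟨hp1, hp2, hp3⟩ := hp
      have hc := (convex_convexHull ℝ ({v1, v2, v3} : Set (ℝ × ℝ))).sum_mem
        (t := Finset.univ) (w := ![1 - p.1 - p.2, p.1, p.2]) (z := ![v1, v2, v3])
        ?_ ?_ ?_
      · simpa [Fin.sum_univ_three] using hc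
      · intro i _
        fin_cases i <;> simp <;> linarith
      · simp [Fin.sum_univ_three]
        ring
      · intro i _
        apply subset_convexHull
        fin_cases i <;> simp
  have hCoV : ∀ g : ℝ × ℝ → ℝ,
      ∫ x in K, g x = ∫ x in S, |d| • g (f x) := by
    intro g
    rw [hImage, integral_image_eq_integral_abs_det_fderiv_smul volume hSm hDeriv hfInj g]
    simp only [hLdet]
  have hvol : (volume K).toReal = |d| / 2 := by
    have h1 := hCoV (fun _ => (1 : ℝ))
    rw [setIntegral_const] at h1
    simp only [smul_eq_mul, mul_one] at h1
    show volume.real K = |d| / 2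
    rw [h1]
    have h2 : ∀ x ∈ S, |d| = |d| + 0 * x.1 + 0 * x.2 := by intro x _; ring
    rw [setIntegral_congr_fun hSm h2, hS, simplex_integral]
    ring
  set P1 : ℝ := a + b * v1.1 + c * v1.2 with hP1
  set P2 : ℝ := a + b * v2.1 + c * v2.2 with hP2
  set P3 : ℝ := a + b * v3.1 + c * v3.2 with hP3
  have hI : ∫ q in K, (a + b * q.1 + c * q.2) = |d| * ((P1 + P2 + P3) / 6) := by
    rw [hCoV (fun q => a + b * q.1 + c * q.2)]
    have h2 : ∀ x ∈ S, |d| • (a + b * (f x).1 + c * (f x).2)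
        = (|d| * P1) + (|d| * (P2 - P1)) * x.1 + (|d| * (P3 - P1)) * x.2 := by
      intro x _
      rw [hfdef]
      show |d| • (a + b * (v1 + L x).1 + c * (v1 + L x).2) = _
      rw [hLapp]
      simp only [Prod.fst_add, Prod.snd_add, smul_eq_mul, hP1, hP2, hP3]
      ring
    rw [setIntegral_congr_fun hSm h2, hS, simplex_integral]
    ring
  have e1 : (∫ t in (0:ℝ)..1, (a + b * ((1 - t) • v2 + t • v3).1 + c * ((1 - t) • v2 + t • v3).2))
      = (P2 + P3) / 2 := by
    rw [show (fun t : ℝ => a + b * ((1 - t) • v2 + t • v3).1 + c * ((1 - t) • v2 + t • v3).2)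
        = (fun t : ℝ => P2 + (P3 - P2) * t + 0 * t ^ 2) from funext fun t => by
      simp only [Prod.fst_add, Prod.snd_add, Prod.smul_fst, Prod.smul_snd, smul_eq_mul,
        hP2, hP3]
      ring]
    rw [intpoly]
    ring
  have e2 : (∫ t in (0:ℝ)..1, (a + b * ((1 - t) • v1 + t • v3).1 + c * ((1 - t) • v1 + t • v3).2))
      = (P1 + P3) / 2 := by
    rw [show (fun t : ℝ => a + b * ((1 - t) • v1 + t • v3).1 + c * ((1 - t) • v1 + t • v3).2)
        = (fun t : ℝ => P1 + (P3 - P1) * t + 0 * t ^ 2) from funext fun t => by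
      simp only [Prod.fst_add, Prod.snd_add, Prod.smul_fst, Prod.smul_snd, smul_eq_mul,
        hP1, hP3]
      ring]
    rw [intpoly]
    ring
  have e3 : (∫ t in (0:ℝ)..1, (a + b * ((1 - t) • v1 + t • v2).1 + c * ((1 - t) • v1 + t • v2).2))
      = (P1 + P2) / 2 := by
    rw [show (fun t : ℝ => a + b * ((1 - t) • v1 + t • v2).1 + c * ((1 - t) • v1 + t • v2).2)
        = (fun t : ℝ => P1 + (P2 - P1) * t + 0 * t ^ 2) from funext fun t => by
      simp only [Prod.fst_add, Prod.snd_add, Prod.smul_fst, Prod.smul_snd, smul_eq_mul,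
        hP1, hP2]
      ring]
    rw [intpoly]
    ring
  rw [hI, hvol, e1, e2, e3]
  have hsum : 1 / (|d| / 2) * (|d| * ((P1 + P2 + P3) / 6)) = (P1 + P2 + P3) / 3 := by
    field_simp
    ring
  rw [hsum]
  have hl10 : 0 < l1 := lt_of_lt_of_le h3 (le_trans h23 h12)
  have hl20 : 0 < l2 := lt_of_lt_of_le h3 h23
  have hden : (3 * l1 + 3 * l2) ≠ 0 := ne_of_gt (by linarith)
  have hx1 : ((l1 + l2 - 2 * l3)⁻¹ • ((l1 - l3) • v1 + (l2 - l3) • v2)).1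
      = (l1 + l2 - 2 * l3)⁻¹ * ((l1 - l3) * v1.1 + (l2 - l3) * v2.1) := by
    simp [Prod.smul_fst, Prod.fst_add, smul_eq_mul]
    ring
  have hx2 : ((l1 + l2 - 2 * l3)⁻¹ • ((l1 - l3) • v1 + (l2 - l3) • v2)).2
      = (l1 + l2 - 2 * l3)⁻¹ * ((l1 - l3) * v1.2 + (l2 - l3) * v2.2) := by
    simp [Prod.smul_snd, Prod.snd_add, smul_eq_mul]
    ring
  rw [hx1, hx2]
  by_cases hD : l1 + l2 - 2 * l3 = 0
  · have h13 : l1 = l3 := by linarith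
    have h23' : l2 = l3 := by linarith
    rw [hD]
    rw [h13, h23']
    have hl3ne : l3 ≠ 0 := ne_of_gt h3
    field_simp
    ring
  · simp only [hP1, hP2, hP3]
    field_simp
    ring
end

section
/- Let K be a triangle with vertices v1, v2, v3 and opposite edge lengths l1 ≥ l2 ≥ l3. There is no convex decomposition of the P1 cell average on K, i.e. nonnegative edge weights w̃1, w̃2, w̃3, nonnegative internal weights ω̃_s with nodes in K summing with the w̃_i to one, exact for all affine polynomials, such that min{w̃1/l1, w̃2/l2, w̃3/l3} > 2/(3(l1 + l2)). In other words, the BP CFL number 2/(3(l1+l2)) is optimal for P1. -/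
open MeasureTheory


lemma cov (c0 : ℝ×ℝ) (L : (ℝ×ℝ) →L[ℝ] (ℝ×ℝ)) {s : Set (ℝ×ℝ)} (hs : MeasurableSet s)
    (hinj : Function.Injective (fun p : ℝ×ℝ => c0 + L p)) (g : ℝ×ℝ → ℝ) :
    ∫ x in (fun p : ℝ×ℝ => c0 + L p) '' s, g x
      = ∫ x in s, |LinearMap.det (L : (ℝ×ℝ) →ₗ[ℝ] (ℝ×ℝ))| * g (c0 + L x) := by
  have h := integral_image_eq_integral_abs_det_fderiv_smul volume hs
    (fun x _ => ((L.hasFDerivAt).const_add c0).hasFDerivWithinAt) hinj.injOn g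
  simpa [smul_eq_mul, ContinuousLinearMap.det] using h

lemma image_hull (c0 : ℝ×ℝ) (L : (ℝ×ℝ) →L[ℝ] (ℝ×ℝ)) (s : Set (ℝ×ℝ)) :
    (fun p : ℝ×ℝ => c0 + L p) '' (convexHull ℝ s)
      = convexHull ℝ ((fun p : ℝ×ℝ => c0 + L p) '' s) := by
  have h : (fun p : ℝ×ℝ => c0 + L p)
      = ⇑(AffineMap.const ℝ (ℝ×ℝ) c0 + (L : (ℝ×ℝ) →ₗ[ℝ] (ℝ×ℝ)).toAffineMap) := by
    funext p; simp
  rw [h, AffineMap.image_convexHull]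

lemma det_formula (f : (ℝ×ℝ) →ₗ[ℝ] (ℝ×ℝ)) :
    LinearMap.det f = (f (1,0)).1 * (f (0,1)).2 - (f (0,1)).1 * (f (1,0)).2 := by
  rw [← LinearMap.det_toMatrix (Module.Basis.finTwoProd ℝ), Matrix.det_fin_two]
  simp [LinearMap.toMatrix_apply, Module.Basis.finTwoProd_zero, Module.Basis.finTwoProd_one,
    Module.Basis.coe_finTwoProd_repr]

lemma mem_tri {s t : ℝ} (hs : 0 ≤ s) (ht : 0 ≤ t) (hst : s + t ≤ 1) :
    ((s,t) : ℝ×ℝ) ∈ convexHull ℝ ({((0:ℝ),(0:ℝ)), (1,0), (0,1)} : Set (ℝ×ℝ)) := by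
  have h := Finset.centerMass_mem_convexHull (s := ({((0:ℝ),(0:ℝ)), (1,0), (0,1)} : Set (ℝ×ℝ)))
    (Finset.univ : Finset (Fin 3))
    (w := ![1-s-t, s, t]) (z := ![((0:ℝ),(0:ℝ)), (1,0), (0,1)])
    (by intro i _; fin_cases i <;> simp <;> linarith)
    (by simp [Fin.sum_univ_three]; linarith)
    (by intro i _; fin_cases i <;> simp)
  have e : (Finset.univ : Finset (Fin 3)).centerMass ![1-s-t, s, t] ![((0:ℝ),(0:ℝ)), (1,0), (0,1)]
      = (s, t) := by
    simp [Finset.centerMass, Fin.sum_univ_three, Prod.ext_iff]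
    constructor <;> ring
  rwa [e] at h

noncomputable def Tri : Set (ℝ×ℝ) := convexHull ℝ ({((0:ℝ),(0:ℝ)), (1,0), (0,1)} : Set (ℝ×ℝ))

lemma tri_compact : IsCompact Tri := by
  exact (Set.toFinite _).isCompact_convexHull ℝ

lemma tri_meas : MeasurableSet Tri := tri_compact.isClosed.measurableSet

lemma tri_vol_pos : 0 < (volume Tri).toReal := by
  have hsub : Set.Icc (1/8:ℝ) (1/4) ×ˢ Set.Icc (1/8:ℝ) (1/4) ⊆ Tri := by
    rintro ⟨s, t⟩ ⟨hs, ht⟩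
    simp only [Set.mem_Icc] at hs ht
    exact mem_tri (by linarith [hs.1]) (by linarith [ht.1]) (by linarith [hs.2, ht.2])
  have hb : (0:ENNReal) < volume (Set.Icc (1/8:ℝ) (1/4) ×ˢ Set.Icc (1/8:ℝ) (1/4)) := by
    rw [MeasureTheory.Measure.volume_eq_prod, Measure.prod_prod, Real.volume_Icc]
    norm_num
  have hpos : 0 < volume Tri := lt_of_lt_of_le hb (measure_mono hsub)
  exact ENNReal.toReal_pos hpos.ne' tri_compact.measure_lt_top.ne

lemma tri_snd_integral : (∫ p in Tri, (p.2 : ℝ)) = (volume Tri).toReal / 3 := by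
  -- swap map σ
  set σ : (ℝ×ℝ) →L[ℝ] (ℝ×ℝ) := (ContinuousLinearMap.snd ℝ ℝ ℝ).prod (ContinuousLinearMap.fst ℝ ℝ ℝ) with hσ
  have hσapp : ∀ p : ℝ×ℝ, (0:ℝ×ℝ) + σ p = (p.2, p.1) := by intro p; simp [hσ]
  have hσinj : Function.Injective (fun p : ℝ×ℝ => (0:ℝ×ℝ) + σ p) := by
    intro a b h; simp only [hσapp] at h; exact Prod.ext (congrArg Prod.snd h) (congrArg Prod.fst h)
  have hσdet : LinearMap.det ((σ : (ℝ×ℝ) →ₗ[ℝ] (ℝ×ℝ))) = -1 := by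
    rw [det_formula]; simp [hσ]
  have hσim : (fun p : ℝ×ℝ => (0:ℝ×ℝ) + σ p) '' Tri = Tri := by
    rw [Tri, image_hull]
    congr 1
    simp only [Set.image_insert_eq, Set.image_singleton, hσapp]
    ext x; simp [Prod.ext_iff]; tauto
  -- τ map
  set Lτ : (ℝ×ℝ) →L[ℝ] (ℝ×ℝ) :=
    ((-(ContinuousLinearMap.fst ℝ ℝ ℝ)) - ContinuousLinearMap.snd ℝ ℝ ℝ).prod
      (ContinuousLinearMap.snd ℝ ℝ ℝ) with hLτ
  have hτapp : ∀ p : ℝ×ℝ, ((1:ℝ),(0:ℝ)) + Lτ p = (1 - p.1 - p.2, p.2) := by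
    intro p; simp [hLτ, Prod.ext_iff]; ring
  have hτinj : Function.Injective (fun p : ℝ×ℝ => ((1:ℝ),(0:ℝ)) + Lτ p) := by
    have : Function.LeftInverse (fun p : ℝ×ℝ => ((1:ℝ),(0:ℝ)) + Lτ p)
        (fun p : ℝ×ℝ => ((1:ℝ),(0:ℝ)) + Lτ p) := by
      intro p; simp [hτapp, Prod.ext_iff]; try ring
    exact this.injective
  have hτdet : LinearMap.det ((Lτ : (ℝ×ℝ) →ₗ[ℝ] (ℝ×ℝ))) = -1 := by
    rw [det_formula]; norm_num [hLτ]
  have hτim : (fun p : ℝ×ℝ => ((1:ℝ),(0:ℝ)) + Lτ p) '' Tri = Tri := by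
    rw [Tri, image_hull]
    congr 1
    simp only [Set.image_insert_eq, Set.image_singleton, hτapp]
    ext x; simp [Prod.ext_iff]; tauto
  -- two change of variables
  have e1 : (∫ p in Tri, (p.1 : ℝ)) = ∫ p in Tri, (p.2 : ℝ) := by
    conv_lhs => rw [← hσim, cov _ _ tri_meas hσinj]
    simp [hσdet, hσapp]
  have e2 : (∫ p in Tri, (p.1 : ℝ)) = ∫ p in Tri, (1 - p.1 - p.2 : ℝ) := by
    conv_lhs => rw [← hτim, cov _ _ tri_meas hτinj]
    simp [hτdet, hτapp]
  have i1 : IntegrableOn (fun p : ℝ×ℝ => (p.1:ℝ)) Tri volume :=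
    (continuous_fst.continuousOn : ContinuousOn (fun p : ℝ×ℝ => p.1) Tri).integrableOn_compact tri_compact
  have i2 : IntegrableOn (fun p : ℝ×ℝ => (p.2:ℝ)) Tri volume :=
    (continuous_snd.continuousOn : ContinuousOn (fun p : ℝ×ℝ => p.2) Tri).integrableOn_compact tri_compact
  have ic : IntegrableOn (fun _ : ℝ×ℝ => (1:ℝ)) Tri volume := integrableOn_const tri_compact.measure_lt_top.ne
  have e3 : (∫ p in Tri, (1 - p.1 - p.2 : ℝ))
      = (volume Tri).toReal - (∫ p in Tri, (p.1:ℝ)) - ∫ p in Tri, (p.2:ℝ) := by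
    calc (∫ p in Tri, (1 - p.1 - p.2 : ℝ))
        = ∫ p in Tri, ((fun p : ℝ×ℝ => (1:ℝ)) p - (fun p : ℝ×ℝ => p.1 + p.2) p) := by
          congr 1; funext p; simp; ring
      _ = (∫ _ in Tri, (1:ℝ)) - ∫ p in Tri, (p.1 + p.2 : ℝ) := integral_sub ic (i1.add i2)
      _ = (∫ _ in Tri, (1:ℝ)) - ((∫ p in Tri, (p.1:ℝ)) + ∫ p in Tri, (p.2:ℝ)) := by
          rw [integral_add i1 i2]
      _ = (volume Tri).toReal - (∫ p in Tri, (p.1:ℝ)) - ∫ p in Tri, (p.2:ℝ) := by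
          simp [setIntegral_const, measureReal_def]; ring
  linarith [e1, e2, e3]



lemma edge_integral (a b c x1 y1 x2 y2 : ℝ) :
    (∫ t in (0:ℝ)..1, (a + b*((1-t)*x1+t*x2) + c*((1-t)*y1+t*y2)))
      = a + b*(x1+x2)/2 + c*(y1+y2)/2 := by
  have h : (fun t : ℝ => a + b*((1-t)*x1+t*x2) + c*((1-t)*y1+t*y2))
      = fun t : ℝ => (a + b*x1 + c*y1) + (b*(x2-x1)+c*(y2-y1)) * t := by
    funext t; ring
  rw [h, intervalIntegral.integral_add (intervalIntegrable_const)
    ((intervalIntegral.intervalIntegrable_id).const_mul _),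
    intervalIntegral.integral_const_mul, integral_id]
  simp; ring

lemma image_hull' (a : ℝ) (L : (ℝ×ℝ) →L[ℝ] ℝ) (s : Set (ℝ×ℝ)) :
    (fun p : ℝ×ℝ => a + L p) '' (convexHull ℝ s)
      = convexHull ℝ ((fun p : ℝ×ℝ => a + L p) '' s) := by
  have h : (fun p : ℝ×ℝ => a + L p)
      = ⇑(AffineMap.const ℝ (ℝ×ℝ) a + (L : (ℝ×ℝ) →ₗ[ℝ] ℝ).toAffineMap) := by
    funext p; simp
  rw [h, AffineMap.image_convexHull]

set_option maxHeartbeats 2000000 in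
/-- Optimality of the P1 BP CFL number `2/(3(l1+l2))`: there is no feasible
convex decomposition of the P1 cell average on a triangle `K` (nonnegative edge weights
`w̃ᵢ` and internal weights `ω̃ₛ` with nodes in `K`, summing to one, exact for all affine
polynomials) whose BP CFL number `min w̃ᵢ/lᵢ` exceeds `2/(3(l1+l2))`. Here edge `eᵢ` is
opposite vertex `vᵢ` and is parametrized over `[0,1]`, so that
`(w̃ᵢ/lᵢ)∫_{eᵢ} p ds = w̃ᵢ ∫₀¹ p(edge(t)) dt`. -/
theorem stmt3 (v1 v2 v3 : ℝ × ℝ) (hind : AffineIndependent ℝ ![v1, v2, v3])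
    (l1 l2 l3 : ℝ)
    (hl1 : l1 = dist v2 v3) (hl2 : l2 = dist v1 v3) (hl3 : l3 = dist v1 v2)
    (h12 : l2 ≤ l1) (h23 : l3 ≤ l2) (h3 : 0 < l3)
    (S : ℕ) (w : Fin 3 → ℝ) (ωt : Fin S → ℝ) (node : Fin S → ℝ × ℝ)
    (hw : ∀ i, 0 ≤ w i) (hωt : ∀ s, 0 ≤ ωt s)
    (hnode : ∀ s, node s ∈ convexHull ℝ ({v1, v2, v3} : Set (ℝ × ℝ)))
    (hsum : ∑ i, w i + ∑ s, ωt s = 1)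
    (hexact : ∀ a b c : ℝ,
      (1 / (volume (convexHull ℝ ({v1, v2, v3} : Set (ℝ × ℝ)))).toReal) *
          ∫ q in convexHull ℝ ({v1, v2, v3} : Set (ℝ × ℝ)), (a + b * q.1 + c * q.2) =
        w 0 * (∫ t in (0:ℝ)..1,
            (a + b * ((1 - t) • v2 + t • v3).1 + c * ((1 - t) • v2 + t • v3).2))
        + w 1 * (∫ t in (0:ℝ)..1,
            (a + b * ((1 - t) • v1 + t • v3).1 + c * ((1 - t) • v1 + t • v3).2))
        + w 2 * (∫ t in (0:ℝ)..1,
            (a + b * ((1 - t) • v1 + t • v2).1 + c * ((1 - t) • v1 + t • v2).2))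
        + ∑ s, ωt s * (a + b * (node s).1 + c * (node s).2)) :
    ¬ (2 / (3 * (l1 + l2)) < w 0 / l1 ∧ 2 / (3 * (l1 + l2)) < w 1 / l2 ∧
        2 / (3 * (l1 + l2)) < w 2 / l3) := by
  rintro ⟨hc1, hc2, -⟩
  set K : Set (ℝ×ℝ) := convexHull ℝ ({v1, v2, v3} : Set (ℝ × ℝ)) with hK
  set D : ℝ := (v3.1-v1.1)*(v2.2-v1.2) - (v3.2-v1.2)*(v2.1-v1.1) with hDdef
  -- D ≠ 0 from affine independence
  have hD : D ≠ 0 := by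
    intro hD0
    have hD0' : (v3.1-v1.1)*(v2.2-v1.2) - (v3.2-v1.2)*(v2.1-v1.1) = 0 := by
      rw [hDdef] at hD0; exact hD0
    have key : ∀ wt : Fin 3 → ℝ, (∑ i, wt i) = 0 → (∑ i, wt i • ![v1,v2,v3] i) = 0 →
        ∀ e : Fin 3, wt e = 0 := fun wt h1 h2 e =>
      affineIndependent_iff.1 hind Finset.univ wt h1 h2 e (Finset.mem_univ _)
    by_cases h22 : v2.2 - v1.2 = 0
    · by_cases h21 : v2.1 - v1.1 = 0
      · have := key ![1,-1,0] (by norm_num [Fin.sum_univ_three, Matrix.cons_val_two, Matrix.tail_cons, Matrix.head_cons])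
          (by
            simp only [Fin.sum_univ_three, Matrix.cons_val_zero, Matrix.cons_val_one,
              Matrix.head_cons, Matrix.cons_val_two, Matrix.tail_cons]
            refine Prod.ext ?_ ?_ <;>
              simp only [Prod.fst_add, Prod.snd_add, Prod.smul_fst, Prod.smul_snd,
                smul_eq_mul, Prod.fst_zero, Prod.snd_zero] <;> linarith) 0
        norm_num [Matrix.cons_val_two, Matrix.tail_cons, Matrix.head_cons] at this
      · have h32 : v3.2 - v1.2 = 0 := by
          rcases mul_eq_zero.1 (show (v3.2-v1.2)*(v2.1-v1.1) = 0 by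
            linear_combination -hD0' + (v3.1-v1.1)*h22) with h | h
          · exact h
          · exact absurd h h21
        set k : ℝ := (v3.1-v1.1)/(v2.1-v1.1) with hk
        have := key ![k-1,-k,1] (by simp [Fin.sum_univ_three]; ring)
          (by
            simp only [Fin.sum_univ_three, Matrix.cons_val_zero, Matrix.cons_val_one,
              Matrix.head_cons, Matrix.cons_val_two, Matrix.tail_cons]
            refine Prod.ext ?_ ?_ <;>
              simp only [Prod.fst_add, Prod.snd_add, Prod.smul_fst, Prod.smul_snd,
                smul_eq_mul, Prod.fst_zero, Prod.snd_zero, hk]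
            · field_simp
              ring
            · have e2 : v2.2 = v1.2 := by linarith
              have e3 : v3.2 = v1.2 := by linarith
              simp only [e2, e3]
              ring) 2
        norm_num [Matrix.cons_val_two, Matrix.tail_cons, Matrix.head_cons] at this
    · set k : ℝ := (v3.2-v1.2)/(v2.2-v1.2) with hk
      have := key ![k-1,-k,1] (by simp [Fin.sum_univ_three]; ring)
        (by
          simp only [Fin.sum_univ_three, Matrix.cons_val_zero, Matrix.cons_val_one,
            Matrix.head_cons, Matrix.cons_val_two, Matrix.tail_cons]
          refine Prod.ext ?_ ?_ <;>
            simp only [Prod.fst_add, Prod.snd_add, Prod.smul_fst, Prod.smul_snd,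
              smul_eq_mul, Prod.fst_zero, Prod.snd_zero, hk]
          · field_simp
            linear_combination hD0'
          · field_simp
            ring) 2
      norm_num [Matrix.cons_val_two, Matrix.tail_cons, Matrix.head_cons] at this
  -- the barycentric coordinate λ3 = a + b x + c y
  set a : ℝ := (v1.2*(v2.1-v1.1) - v1.1*(v2.2-v1.2))/D with ha
  set b : ℝ := (v2.2-v1.2)/D with hb
  set c : ℝ := -(v2.1-v1.1)/D with hc
  have hlam : ∀ x y : ℝ, a + b*x + c*y
      = ((x - v1.1)*(v2.2-v1.2) - (y - v1.2)*(v2.1-v1.1))/D := by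
    intro x y; rw [ha, hb, hc]; ring
  -- the parametrization T of K over Tri
  set L : (ℝ×ℝ) →L[ℝ] (ℝ×ℝ) := (ContinuousLinearMap.fst ℝ ℝ ℝ).smulRight (v2 - v1)
      + (ContinuousLinearMap.snd ℝ ℝ ℝ).smulRight (v3 - v1) with hL
  have hLapp : ∀ p : ℝ×ℝ, v1 + L p
      = (v1.1 + p.1*(v2.1-v1.1) + p.2*(v3.1-v1.1), v1.2 + p.1*(v2.2-v1.2) + p.2*(v3.2-v1.2)) := by
    intro p
    refine Prod.ext ?_ ?_ <;>
      simp [hL, Prod.fst_sub, Prod.snd_sub, smul_eq_mul] <;> ring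
  have hdetL : LinearMap.det ((L : (ℝ×ℝ) →ₗ[ℝ] (ℝ×ℝ))) = -D := by
    rw [det_formula]
    have e1 : (L : (ℝ×ℝ) →ₗ[ℝ] (ℝ×ℝ)) ((1:ℝ),(0:ℝ)) = v1 + L ((1:ℝ),(0:ℝ)) - v1 := by simp
    have e2 : (L : (ℝ×ℝ) →ₗ[ℝ] (ℝ×ℝ)) ((0:ℝ),(1:ℝ)) = v1 + L ((0:ℝ),(1:ℝ)) - v1 := by simp
    rw [e1, e2, hLapp, hLapp]
    simp only [Prod.fst_sub, Prod.snd_sub]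
    ring
  have hTinj : Function.Injective (fun p : ℝ×ℝ => v1 + L p) := by
    intro p q hpq
    simp only [hLapp, Prod.ext_iff] at hpq
    obtain ⟨e1, e2⟩ := hpq
    have h1 : (p.1 - q.1) * D = 0 := by linear_combination (v3.1-v1.1)*e2 - (v3.2-v1.2)*e1
    have h2 : (p.2 - q.2) * D = 0 := by linear_combination (v2.2-v1.2)*e1 - (v2.1-v1.1)*e2
    have hp1 : p.1 = q.1 := by
      rcases mul_eq_zero.1 h1 with h | h
      · linarith
      · exact absurd h hD
    have hp2 : p.2 = q.2 := by
      rcases mul_eq_zero.1 h2 with h | h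
      · linarith
      · exact absurd h hD
    exact Prod.ext hp1 hp2
  have hT0 : v1 + L ((0:ℝ),(0:ℝ)) = v1 := by
    rw [hLapp]; refine Prod.ext ?_ ?_ <;> simp
  have hT1 : v1 + L ((1:ℝ),(0:ℝ)) = v2 := by
    rw [hLapp]; refine Prod.ext ?_ ?_ <;> simp
  have hT2 : v1 + L ((0:ℝ),(1:ℝ)) = v3 := by
    rw [hLapp]; refine Prod.ext ?_ ?_ <;> simp
  have hTim : (fun p : ℝ×ℝ => v1 + L p) '' Tri = K := by
    rw [Tri, image_hull, hK]
    congr 1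
    simp only [Set.image_insert_eq, Set.image_singleton]
    rw [hT0, hT1, hT2]
  have hKcomp : IsCompact K := (Set.toFinite _).isCompact_convexHull ℝ
  have hKmeas : MeasurableSet K := hKcomp.isClosed.measurableSet
  -- volume of K
  have hVK : (volume K).toReal = |D| * (volume Tri).toReal := by
    have h1 : (∫ _ in K, (1:ℝ)) = (volume K).toReal := by simp [setIntegral_const, measureReal_def]
    have h2 : (∫ _ in K, (1:ℝ)) = |D| * (volume Tri).toReal := by
      rw [← hTim, cov _ _ tri_meas hTinj]
      rw [hdetL]
      simp [setIntegral_const, abs_neg, mul_comm, measureReal_def]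
    linarith
  -- integral of λ3 over K
  have hIK : (∫ q in K, (a + b * q.1 + c * q.2)) = |D| * ((volume Tri).toReal / 3) := by
    rw [← hTim, cov _ _ tri_meas hTinj, hdetL]
    have hfun : (fun x : ℝ×ℝ => |(-D)| * (a + b * (v1 + L x).1 + c * (v1 + L x).2))
        = fun x : ℝ×ℝ => |D| * x.2 := by
      funext x
      rw [abs_neg, hLapp]
      have : a + b * (v1.1 + x.1*(v2.1-v1.1) + x.2*(v3.1-v1.1))
          + c * (v1.2 + x.1*(v2.2-v1.2) + x.2*(v3.2-v1.2)) = x.2 := by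
        rw [hlam, div_eq_iff hD, hDdef]; ring
      rw [this]
    rw [hfun, integral_const_mul, tri_snd_integral]
  have hVKpos : 0 < (volume K).toReal := by
    rw [hVK]; exact mul_pos (abs_pos.2 hD) tri_vol_pos
  -- LHS is 1/3
  have hLHS : (1 / (volume K).toReal) * ∫ q in K, (a + b * q.1 + c * q.2) = 1/3 := by
    rw [hIK, hVK]
    have hne1 : |D| ≠ 0 := abs_ne_zero.mpr hD
    have hne2 : (volume Tri).toReal ≠ 0 := ne_of_gt tri_vol_pos
    field_simp
  -- edge integrals
  have val1 : a + b * v1.1 + c * v1.2 = 0 := by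
    rw [hlam, div_eq_iff hD]; ring
  have val2 : a + b * v2.1 + c * v2.2 = 0 := by
    rw [hlam, div_eq_iff hD]; ring
  have val3 : a + b * v3.1 + c * v3.2 = 1 := by
    rw [hlam, div_eq_iff hD, hDdef]; ring
  have hE1 : (∫ t in (0:ℝ)..1, (a + b * ((1 - t) • v2 + t • v3).1 + c * ((1 - t) • v2 + t • v3).2))
      = 1/2 := by
    simp only [Prod.fst_add, Prod.snd_add, Prod.smul_fst, Prod.smul_snd, smul_eq_mul]
    rw [edge_integral,
      show a + b * (v2.1 + v3.1) / 2 + c * (v2.2 + v3.2) / 2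
        = (a + b*v2.1 + c*v2.2)/2 + (a + b*v3.1 + c*v3.2)/2 from by ring, val2, val3]
    norm_num
  have hE2 : (∫ t in (0:ℝ)..1, (a + b * ((1 - t) • v1 + t • v3).1 + c * ((1 - t) • v1 + t • v3).2))
      = 1/2 := by
    simp only [Prod.fst_add, Prod.snd_add, Prod.smul_fst, Prod.smul_snd, smul_eq_mul]
    rw [edge_integral,
      show a + b * (v1.1 + v3.1) / 2 + c * (v1.2 + v3.2) / 2
        = (a + b*v1.1 + c*v1.2)/2 + (a + b*v3.1 + c*v3.2)/2 from by ring, val1, val3]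
    norm_num
  have hE3 : (∫ t in (0:ℝ)..1, (a + b * ((1 - t) • v1 + t • v2).1 + c * ((1 - t) • v1 + t • v2).2))
      = 0 := by
    simp only [Prod.fst_add, Prod.snd_add, Prod.smul_fst, Prod.smul_snd, smul_eq_mul]
    rw [edge_integral,
      show a + b * (v1.1 + v2.1) / 2 + c * (v1.2 + v2.2) / 2
        = (a + b*v1.1 + c*v1.2)/2 + (a + b*v2.1 + c*v2.2)/2 from by ring, val1, val2]
    norm_num
  -- nodes give nonnegative values
  have hnonneg : ∀ s : Fin S, 0 ≤ a + b * (node s).1 + c * (node s).2 := by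
    intro s
    set Lφ : (ℝ×ℝ) →L[ℝ] ℝ := b • (ContinuousLinearMap.fst ℝ ℝ ℝ)
        + c • (ContinuousLinearMap.snd ℝ ℝ ℝ) with hLφ
    have happ : ∀ p : ℝ×ℝ, a + Lφ p = a + b * p.1 + c * p.2 := by
      intro p; simp [hLφ]; ring
    have hmem : (fun p : ℝ×ℝ => a + Lφ p) (node s)
        ∈ (fun p : ℝ×ℝ => a + Lφ p) '' K := Set.mem_image_of_mem _ (hnode s)
    rw [hK, image_hull'] at hmem
    have h1 : (fun p : ℝ×ℝ => a + Lφ p) '' {v1, v2, v3} ⊆ Set.Ici (0:ℝ) := by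
      rintro x ⟨y, hy, rfl⟩
      simp only [Set.mem_Ici]
      rcases hy with rfl | rfl | rfl
      · rw [happ]; linarith [val1]
      · rw [happ]; linarith [val2]
      · rw [happ]; linarith [val3]
    have h2 := convexHull_min h1 (convex_Ici 0) hmem
    have h2' : (0:ℝ) ≤ a + Lφ (node s) := h2
    rw [happ] at h2'
    exact h2'
  -- conclude
  have hexa := hexact a b c
  rw [hLHS, hE1, hE2, hE3] at hexa
  have hsum_nonneg : 0 ≤ ∑ s, ωt s * (a + b * (node s).1 + c * (node s).2) :=
    Finset.sum_nonneg fun s _ => mul_nonneg (hωt s) (hnonneg s)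
  have hl2pos : 0 < l2 := lt_of_lt_of_le h3 h23
  have hl1pos : 0 < l1 := lt_of_lt_of_le hl2pos h12
  have hlpos : 0 < l1 + l2 := by linarith
  have hc1' : 2 * l1 < w 0 * (3 * (l1 + l2)) := by
    rw [div_lt_div_iff₀ (by positivity) hl1pos] at hc1; linarith
  have hc2' : 2 * l2 < w 1 * (3 * (l1 + l2)) := by
    rw [div_lt_div_iff₀ (by positivity) hl2pos] at hc2; linarith
  nlinarith [hexa, hsum_nonneg, hc1', hc2', hw 0, hw 1, hw 2]
end

section
/- Consider the scalar forward-Euler finite-volume/DG cell-average update ū_K^{n+1} = Σ_{i=1}^3 l_i Σ_ν ω_ν [ (w_i/l_i − αΔt/(2|K|)) u^int_{i,ν} − (Δt/(2|K|)) F(u^int_{i,ν})·n_i + (αΔt/(2|K|)) u^ext_{i,ν} − (Δt/(2|K|)) F(u^ext_{i,ν})·n_i ] + (1 − Σ_i w_i) u*_K, where |F'(u)·n_i| ≤ α for all relevant states. If αΔt/|K| ≤ min_i w_i/l_i, then ū_K^{n+1} is a monotonically nondecreasing function of each argument u^int_{i,ν}, u^ext_{i,ν}, u*_K; consequently if all these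 arguments lie in an interval [u_min, u_max] and the coefficients form a convex combination structure (positive w_i, positive Gauss weights ω_ν summing to 1, Σ_i w_i ≤ 1, and Σ_i l_i n_i = 0), then ū_K^{n+1} ∈ [u_min, u_max]. -/
lemma stmt10_mono_aux {g g' : ℝ → ℝ} {lo hi : ℝ}
    (h : ∀ u, HasDerivAt g (g' u) u)
    (hpos : ∀ u ∈ Set.Icc lo hi, 0 ≤ g' u) :
    MonotoneOn g (Set.Icc lo hi) := by
  apply monotoneOn_of_deriv_nonneg (convex_Icc lo hi)
  · exact fun u _ => (h u).continuousAt.continuousWithinAt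
  · exact fun u _ => (h u).differentiableAt.differentiableWithinAt
  · intro x hx
    rw [interior_Icc] at hx
    rw [(h x).deriv]
    exact hpos x (Set.Ioo_subset_Icc_self hx)


/-- BP property of the scalar forward-Euler cell-average update via a
feasible convex decomposition. With positive edge weights `wᵢ`, Gauss weights `ων`
summing to one, outward normals satisfying `Σ lᵢ • nᵢ = 0`, a C¹ flux `F` with
`|F'(u)·nᵢ| ≤ α` on `[umin, umax]`, and CFL condition `αΔt/|K| ≤ minᵢ wᵢ/lᵢ`, the
update is monotonically nondecreasing in each of the arguments `u^int`, `u^ext`, `u*`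
(on `[umin, umax]`), and consequently maps arguments in `[umin, umax]` into
`[umin, umax]`. -/
theorem stmt10 (Q : ℕ) (hQ : 0 < Q)
    (l : Fin 3 → ℝ) (hl : ∀ i, 0 < l i)
    (n : Fin 3 → ℝ × ℝ) (hn : ∑ i, l i • n i = 0)
    (w : Fin 3 → ℝ) (hw : ∀ i, 0 < w i) (hwsum : ∑ i, w i ≤ 1)
    (ω : Fin Q → ℝ) (hω : ∀ ν, 0 < ω ν) (hωsum : ∑ ν, ω ν = 1)
    (A Δt α umin umax : ℝ) (hA : 0 < A) (hΔt : 0 < Δt) (hα : 0 ≤ α)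
    (F F' : ℝ → ℝ × ℝ) (hF : ∀ u, HasDerivAt F (F' u) u)
    (hbound : ∀ u ∈ Set.Icc umin umax, ∀ i,
      |(F' u).1 * (n i).1 + (F' u).2 * (n i).2| ≤ α)
    (hCFL : ∀ i, α * Δt / A ≤ w i / l i) :
    let update : (Fin 3 → Fin Q → ℝ) → (Fin 3 → Fin Q → ℝ) → ℝ → ℝ :=
      fun uin uex us =>
        (∑ i, l i * ∑ ν, ω ν *
          ((w i / l i - α * Δt / (2 * A)) * uin i ν
            - Δt / (2 * A) * ((F (uin i ν)).1 * (n i).1 + (F (uin i ν)).2 * (n i).2)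
            + α * Δt / (2 * A) * uex i ν
            - Δt / (2 * A) * ((F (uex i ν)).1 * (n i).1 + (F (uex i ν)).2 * (n i).2)))
        + (1 - ∑ i, w i) * us
    (∀ (uin₁ uex₁ : Fin 3 → Fin Q → ℝ) (us₁ : ℝ)
       (uin₂ uex₂ : Fin 3 → Fin Q → ℝ) (us₂ : ℝ),
      (∀ i ν, uin₁ i ν ∈ Set.Icc umin umax) →
      (∀ i ν, uex₁ i ν ∈ Set.Icc umin umax) → us₁ ∈ Set.Icc umin umax →
      (∀ i ν, uin₂ i ν ∈ Set.Icc umin umax) →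
      (∀ i ν, uex₂ i ν ∈ Set.Icc umin umax) → us₂ ∈ Set.Icc umin umax →
      (∀ i ν, uin₁ i ν ≤ uin₂ i ν) → (∀ i ν, uex₁ i ν ≤ uex₂ i ν) → us₁ ≤ us₂ →
      update uin₁ uex₁ us₁ ≤ update uin₂ uex₂ us₂) ∧
    (∀ (uin uex : Fin 3 → Fin Q → ℝ) (us : ℝ),
      (∀ i ν, uin i ν ∈ Set.Icc umin umax) →
      (∀ i ν, uex i ν ∈ Set.Icc umin umax) → us ∈ Set.Icc umin umax →
      update uin uex us ∈ Set.Icc umin umax) := by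
  intro update
  have hA2 : (0:ℝ) < 2 * A := by linarith
  have hd : (0:ℝ) ≤ Δt / (2 * A) := by positivity
  -- derivative of the edge-flux function
  have hFn : ∀ (i : Fin 3) (u : ℝ),
      HasDerivAt (fun x => (F x).1 * (n i).1 + (F x).2 * (n i).2)
        ((F' u).1 * (n i).1 + (F' u).2 * (n i).2) u :=
    fun i u => by
      have ha : HasDerivAt (fun x => (F x).1) (F' u).1 u := (hF u).fst
      have hb : HasDerivAt (fun x => (F x).2) (F' u).2 u := (hF u).snd
      exact (ha.mul_const _).add (hb.mul_const _)
  -- interior-trace monotonicity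
  have monoIn : ∀ i : Fin 3, MonotoneOn
      (fun x => (w i / l i - α * Δt / (2 * A)) * x
        - Δt / (2 * A) * ((F x).1 * (n i).1 + (F x).2 * (n i).2))
      (Set.Icc umin umax) := by
    intro i
    apply stmt10_mono_aux
      (g' := fun x => (w i / l i - α * Δt / (2 * A))
        - Δt / (2 * A) * ((F' x).1 * (n i).1 + (F' x).2 * (n i).2))
    · intro u
      have h1 : HasDerivAt (fun x : ℝ => (w i / l i - α * Δt / (2 * A)) * x)
          (w i / l i - α * Δt / (2 * A)) u := by
        simpa using (hasDerivAt_id u).const_mul (w i / l i - α * Δt / (2 * A))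
      exact h1.sub ((hFn i u).const_mul _)
    · intro u hu
      have hb := (abs_le.mp (hbound u hu i)).2
      have hC := hCFL i
      have hP : Δt / (2 * A) * ((F' u).1 * (n i).1 + (F' u).2 * (n i).2)
          ≤ Δt / (2 * A) * α := mul_le_mul_of_nonneg_left hb hd
      have h2 : α * Δt / A = α * Δt / (2 * A) + Δt / (2 * A) * α := by
        field_simp; ring
      linarith
  -- exterior-trace monotonicity
  have monoEx : ∀ i : Fin 3, MonotoneOn
      (fun x => α * Δt / (2 * A) * x
        - Δt / (2 * A) * ((F x).1 * (n i).1 + (F x).2 * (n i).2))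
      (Set.Icc umin umax) := by
    intro i
    apply stmt10_mono_aux
      (g' := fun x => α * Δt / (2 * A)
        - Δt / (2 * A) * ((F' x).1 * (n i).1 + (F' x).2 * (n i).2))
    · intro u
      have h1 : HasDerivAt (fun x : ℝ => α * Δt / (2 * A) * x) (α * Δt / (2 * A)) u := by
        simpa using (hasDerivAt_id u).const_mul (α * Δt / (2 * A))
      exact h1.sub ((hFn i u).const_mul _)
    · intro u hu
      have hb := (abs_le.mp (hbound u hu i)).2
      have hP : Δt / (2 * A) * ((F' u).1 * (n i).1 + (F' u).2 * (n i).2)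
          ≤ Δt / (2 * A) * α := mul_le_mul_of_nonneg_left hb hd
      have h2 : α * Δt / (2 * A) = Δt / (2 * A) * α := by ring
      linarith
  have hmono : ∀ (uin₁ uex₁ : Fin 3 → Fin Q → ℝ) (us₁ : ℝ)
       (uin₂ uex₂ : Fin 3 → Fin Q → ℝ) (us₂ : ℝ),
      (∀ i ν, uin₁ i ν ∈ Set.Icc umin umax) →
      (∀ i ν, uex₁ i ν ∈ Set.Icc umin umax) → us₁ ∈ Set.Icc umin umax →
      (∀ i ν, uin₂ i ν ∈ Set.Icc umin umax) →
      (∀ i ν, uex₂ i ν ∈ Set.Icc umin umax) → us₂ ∈ Set.Icc umin umax →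
      (∀ i ν, uin₁ i ν ≤ uin₂ i ν) → (∀ i ν, uex₁ i ν ≤ uex₂ i ν) → us₁ ≤ us₂ →
      update uin₁ uex₁ us₁ ≤ update uin₂ uex₂ us₂ := by
    intro uin₁ uex₁ us₁ uin₂ uex₂ us₂ hin₁ hex₁ hus₁ hin₂ hex₂ hus₂ hle_in hle_ex hle_us
    simp only [update]
    apply add_le_add
    · apply Finset.sum_le_sum
      intro i _
      apply mul_le_mul_of_nonneg_left _ (hl i).le
      apply Finset.sum_le_sum
      intro ν _
      apply mul_le_mul_of_nonneg_left _ (hω ν).le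
      have h1 := monoIn i (hin₁ i ν) (hin₂ i ν) (hle_in i ν)
      have h2 := monoEx i (hex₁ i ν) (hex₂ i ν) (hle_ex i ν)
      simp only at h1 h2
      linarith
    · exact mul_le_mul_of_nonneg_left hle_us (by linarith)
  refine ⟨hmono, ?_⟩
  -- component sums of normals vanish
  have h1 : ∑ i, l i * (n i).1 = 0 := by
    have := congrArg Prod.fst hn
    simpa [Prod.fst_sum] using this
  have h2 : ∑ i, l i * (n i).2 = 0 := by
    have := congrArg Prod.snd hn
    simpa [Prod.snd_sum] using this
  -- constant states are fixed points
  have hconst : ∀ u0 : ℝ, update (fun _ _ => u0) (fun _ _ => u0) u0 = u0 := by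
    intro u0
    simp only [update]
    have hsumν : ∀ C : ℝ, ∑ _ν : Fin Q, ω _ν * C = C := by
      intro C; rw [← Finset.sum_mul, hωsum, one_mul]
    have hterm : ∀ i : Fin 3,
        l i * ∑ ν : Fin Q, ω ν *
          ((w i / l i - α * Δt / (2 * A)) * u0
            - Δt / (2 * A) * ((F u0).1 * (n i).1 + (F u0).2 * (n i).2)
            + α * Δt / (2 * A) * u0
            - Δt / (2 * A) * ((F u0).1 * (n i).1 + (F u0).2 * (n i).2))
        = w i * u0 - (Δt / A) *
            ((F u0).1 * (l i * (n i).1) + (F u0).2 * (l i * (n i).2)) := by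
      intro i
      rw [hsumν]
      have hli := (hl i).ne'
      field_simp
      ring
    rw [Finset.sum_congr rfl fun i _ => hterm i]
    rw [Fin.sum_univ_three] at h1 h2 ⊢
    rw [Fin.sum_univ_three]
    linear_combination (-(Δt / A) * (F u0).1) * h1 + (-(Δt / A) * (F u0).2) * h2
  intro uin uex us hin hex hus
  have hlo : umin ≤ umax := hus.1.trans hus.2
  have hminI : ∀ (i : Fin 3) (ν : Fin Q), (umin : ℝ) ∈ Set.Icc umin umax :=
    fun _ _ => ⟨le_refl _, hlo⟩
  constructor
  · calc umin = update (fun _ _ => umin) (fun _ _ => umin) umin := (hconst umin).symm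
      _ ≤ update uin uex us := by
          apply hmono <;>
            first
              | exact fun i ν => ⟨le_refl _, hlo⟩
              | exact ⟨le_refl _, hlo⟩
              | exact hin | exact hex | exact hus
              | exact fun i ν => (hin i ν).1
              | exact fun i ν => (hex i ν).1
              | exact hus.1
  · calc update uin uex us ≤ update (fun _ _ => umax) (fun _ _ => umax) umax := by
          apply hmono <;>
            first
              | exact fun i ν => ⟨hlo, le_refl _⟩
              | exact ⟨hlo, le_refl _⟩
              | exact hin | exact hex | exact hus
              | exact fun i ν => (hin i ν).2
              | exact fun i ν => (hex i ν).2
              | exact hus.2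
      _ = umax := hconst umax
end

section
/- For the 2D Euler state set G = {u ∈ ℝ⁴ : ρ(u) > 0, 𝓔(u) > 0}, the following GQL characterization holds: u ∈ G if and only if u·n₁ > 0 and (u − u★)·n★ > 0 for all u★ ∈ S, where n₁ = (1,0,0,0), S = { (ρ★, ρ★v1★, ρ★v2★, ρ★((v1★)² + (v2★)²)/2) : ρ★ > 0, v1★, v2★ ∈ ℝ }, and n★ = (((v1★)² + (v2★)²)/2, −v1★, −v2★, 1). -/
/-- GQL characterization of the 2D Euler admissible set: a state
`u = (ρ, m1, m2, E)` satisfies `ρ > 0` and `𝓔(u) = E − (m1²+m2²)/(2ρ) > 0` if and only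
if `u·n₁ > 0` (i.e. `ρ > 0`) and `(u − u★)·n★ > 0` for every
`u★ = (ρ★, ρ★v1★, ρ★v2★, ρ★(v1★²+v2★²)/2)` with `ρ★ > 0`, where
`n★ = ((v1★²+v2★²)/2, −v1★, −v2★, 1)`. -/
theorem stmt14 (ρ m1 m2 E : ℝ) :
    (0 < ρ ∧ 0 < E - (m1 ^ 2 + m2 ^ 2) / (2 * ρ)) ↔
    (0 < ρ ∧ ∀ ρs v1s v2s : ℝ, 0 < ρs →
      0 < (ρ - ρs) * ((v1s ^ 2 + v2s ^ 2) / 2)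
          + (m1 - ρs * v1s) * (-v1s) + (m2 - ρs * v2s) * (-v2s)
          + (E - ρs * (v1s ^ 2 + v2s ^ 2) / 2) * 1) := by
  constructor
  · rintro ⟨hρ, hE⟩
    refine ⟨hρ, fun ρs v1s v2s hρs => ?_⟩
    have hE' : m1 ^ 2 + m2 ^ 2 < 2 * ρ * E := by
      have h0 : (m1 ^ 2 + m2 ^ 2) / (2 * ρ) < E := by linarith
      have := (div_lt_iff₀ (by linarith : (0:ℝ) < 2 * ρ)).mp h0
      linarith
    nlinarith [sq_nonneg (ρ * v1s - m1), sq_nonneg (ρ * v2s - m2), hρ.le]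
  · rintro ⟨hρ, h⟩
    refine ⟨hρ, ?_⟩
    have := h 1 (m1 / ρ) (m2 / ρ) one_pos
    have heq : (ρ - 1) * ((m1 / ρ) ^ 2 + (m2 / ρ) ^ 2) / 2
        + (m1 - 1 * (m1 / ρ)) * (-(m1 / ρ)) + (m2 - 1 * (m2 / ρ)) * (-(m2 / ρ))
        + (E - 1 * ((m1 / ρ) ^ 2 + (m2 / ρ) ^ 2) / 2) * 1
        = E - (m1 ^ 2 + m2 ^ 2) / (2 * ρ) := by
      field_simp
      ring
    nlinarith [heq]
end

section
/- Let F_τ be the OE operator acting on a piecewise polynomial u by F_τ u|_K = ū_K Ψ⁰ + Σ_{m=1}^k exp(−Δt Σ_{j=0}^m σ_j(u)) Σ_{ℓ ∈ block m} u_K^{(ℓ)} Ψ^{(ℓ)}, where each damping coefficient σ_j(u) is invariant under affine rescaling of u, i.e. σ_j(a·u + b) = σ_j(u) for all constants a ≠ 0 and b. Then F_τ is scale-invariant: F_τ(a·u + b) = a·(F_τ u) + b. -/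
/-- Scale invariance of the OE operator: if each damping coefficient
`σⱼ(·)` is invariant under the affine rescaling `u ↦ a·u + b` (`a ≠ 0`), then the OE
operator `F_τ` (acting on a cell via an orthogonal basis `Ψ` with `Ψ⁰ ≡ 1`, damping the
modal coefficients blockwise by `exp(−Δt Σ_{j≤m} σⱼ)`) satisfies
`F_τ(a·u + b) = a·(F_τ u) + b`. The modal coefficients of `a·u + b` are `a·c₀ + b` for
`ℓ = 0` and `a·cₗ` for `ℓ ≥ 1`. -/
theorem stmt17 {X : Type*} (k : ℕ) (L : ℕ → ℕ) (Δt : ℝ)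
    (Ψ : ℕ → X → ℝ) (hΨ0 : ∀ x, Ψ 0 x = 1)
    (σ : (X → ℝ) → ℕ → ℝ) (c : ℕ → ℝ) (a b : ℝ) (ha : a ≠ 0)
    (hσ : ∀ j, σ (fun x => a * (∑ ℓ ∈ Finset.range (L k + 1), c ℓ * Ψ ℓ x) + b) j
            = σ (fun x => ∑ ℓ ∈ Finset.range (L k + 1), c ℓ * Ψ ℓ x) j) :
    let u : X → ℝ := fun x => ∑ ℓ ∈ Finset.range (L k + 1), c ℓ * Ψ ℓ x
    let OE : (ℕ → ℝ) → (X → ℝ) → X → ℝ := fun coef v x =>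
      coef 0 * Ψ 0 x +
      ∑ m ∈ Finset.Icc 1 k,
        Real.exp (-(Δt * ∑ j ∈ Finset.range (m + 1), σ v j)) *
          ∑ ℓ ∈ Finset.Icc (L (m - 1) + 1) (L m), coef ℓ * Ψ ℓ x
    ∀ x : X,
      OE (fun ℓ => if ℓ = 0 then a * c 0 + b else a * c ℓ) (fun y => a * u y + b) x
        = a * OE c u x + b := by
  intro u OE x
  simp only [OE, u, hσ, hΨ0, mul_one, if_pos rfl]
  have h : ∀ m ∈ Finset.Icc 1 k,
      Real.exp (-(Δt * ∑ j ∈ Finset.range (m + 1),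
          σ (fun x => ∑ ℓ ∈ Finset.range (L k + 1), c ℓ * Ψ ℓ x) j)) *
        (∑ ℓ ∈ Finset.Icc (L (m-1)+1) (L m),
          (if ℓ = 0 then a * c 0 + b else a * c ℓ) * Ψ ℓ x)
      = a * (Real.exp (-(Δt * ∑ j ∈ Finset.range (m + 1),
          σ (fun x => ∑ ℓ ∈ Finset.range (L k + 1), c ℓ * Ψ ℓ x) j)) *
        ∑ ℓ ∈ Finset.Icc (L (m-1)+1) (L m), c ℓ * Ψ ℓ x) := by
    intro m hm
    simp only [Finset.mul_sum]
    refine Finset.sum_congr rfl fun ℓ hℓ => ?_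
    have hℓ0 : ℓ ≠ 0 := by have := (Finset.mem_Icc.mp hℓ).1; omega
    rw [if_neg hℓ0]; ring
  have h2 : (∑ m ∈ Finset.Icc 1 k,
      Real.exp (-(Δt * ∑ j ∈ Finset.range (m + 1),
          σ (fun x => ∑ ℓ ∈ Finset.range (L k + 1), c ℓ * Ψ ℓ x) j)) *
        (∑ ℓ ∈ Finset.Icc (L (m-1)+1) (L m),
          (if ℓ = 0 then a * c 0 + b else a * c ℓ) * Ψ ℓ x))
      = ∑ m ∈ Finset.Icc 1 k, a * (Real.exp (-(Δt * ∑ j ∈ Finset.range (m + 1),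
          σ (fun x => ∑ ℓ ∈ Finset.range (L k + 1), c ℓ * Ψ ℓ x) j)) *
        ∑ ℓ ∈ Finset.Icc (L (m-1)+1) (L m), c ℓ * Ψ ℓ x) :=
    Finset.sum_congr rfl h
  rw [h2, ← Finset.mul_sum]
  simp only [if_pos trivial]
  ring
end

section
/- Under the hypotheses of the BP theorem for hyperbolic systems — a feasible convex decomposition (positive weights w_i, internal average u*_K), the GQL representation G = G★ of the invariant region, the weak Lax–Friedrichs property α(u − u★)·n★ − (F(u)·n)·n★ ≥ ζ(u★)·n for all u★ ∈ S with α ≥ α_wLF, and Σ_{i=1}^3 l_i n_i = 0 — if all point values u^int_{i,ν}, u^ext_{i,ν} and u*_K lie in G and αΔt/|K| ≤ min_i w_i/l_i, then for every u★ ∈ S the updated cell average satisfies (ū_K^{n+1} − u★)·n★ ≥ (Δt/|K|) Σ_ν ω_ν ζ(u★)·(Σ_i l_i n_i) = 0, hence ū_K^{n+1} ∈ G. -/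
/-- BP theorem for hyperbolic systems via a feasible convex decomposition
and the GQL representation. Under the convex decomposition of the cell average, the GQL
representation `G = {u : (u − u★)·n★ ≥ 0 ∀ u★ ∈ S}`, the weak Lax–Friedrichs property,
`Σ lᵢ • nᵢ = 0`, membership of all point values and of `u*_K` in `G`, and the CFL
condition `αΔt/|K| ≤ minᵢ wᵢ/lᵢ`, the updated cell average satisfies
`(ū^{n+1} − u★)·n★ ≥ 0` for every `u★ ∈ S`, hence `ū^{n+1} ∈ G`. -/
theorem stmt19 {V : Type*} [NormedAddCommGroup V] [InnerProductSpace ℝ V]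
    (Q : ℕ) (hQ : 0 < Q)
    (l : Fin 3 → ℝ) (hl : ∀ i, 0 < l i)
    (n : Fin 3 → ℝ × ℝ) (hnunit : ∀ i, ‖n i‖ = 1)
    (hn : ∑ i, l i • n i = 0)
    (w : Fin 3 → ℝ) (hw : ∀ i, 0 < w i) (hwsum : ∑ i, w i ≤ 1)
    (ω : Fin Q → ℝ) (hω : ∀ ν, 0 < ω ν) (hωsum : ∑ ν, ω ν = 1)
    (A Δt α : ℝ) (hA : 0 < A) (hΔt : 0 < Δt) (hα : 0 ≤ α)
    (F : V → V × V) (S : Set V) (nstar : V → V) (ζ : V → ℝ × ℝ)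
    (G : Set V)
    (hG : G = {u : V | ∀ us ∈ S, 0 ≤ (inner ℝ (u - us) (nstar us) : ℝ)})
    (hwLF : ∀ u ∈ G, ∀ m : ℝ × ℝ, ‖m‖ = 1 → ∀ us ∈ S,
      (ζ us).1 * m.1 + (ζ us).2 * m.2 ≤
        α * (inner ℝ (u - us) (nstar us) : ℝ)
          - (inner ℝ (m.1 • (F u).1 + m.2 • (F u).2) (nstar us) : ℝ))
    (uint uext : Fin 3 → Fin Q → V) (ustarK : V)
    (hint : ∀ i ν, uint i ν ∈ G) (hext : ∀ i ν, uext i ν ∈ G) (hstar : ustarK ∈ G)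
    (ubar ubar1 : V)
    (hdecomp : ubar = ∑ i, w i • (∑ ν, ω ν • uint i ν) + (1 - ∑ i, w i) • ustarK)
    (hupdate : ubar1 = ubar - (Δt / (2 * A)) •
      ∑ i, l i • ∑ ν, ω ν •
        (((n i).1 • (F (uint i ν)).1 + (n i).2 • (F (uint i ν)).2)
          + ((n i).1 • (F (uext i ν)).1 + (n i).2 • (F (uext i ν)).2)
          + α • uint i ν - α • uext i ν))
    (hCFL : ∀ i, α * Δt / A ≤ w i / l i) :
    (∀ us ∈ S, 0 ≤ (inner ℝ (ubar1 - us) (nstar us) : ℝ)) ∧ ubar1 ∈ G := by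
  subst hG
  have main : ∀ us ∈ S, 0 ≤ (inner ℝ (ubar1 - us) (nstar us) : ℝ) := by
    intro us hus
    have hcpos : 0 < Δt / (2 * A) := by positivity
    set c : ℝ := Δt / (2 * A) with hc
    set ns := nstar us with hns
    set T : Fin 3 → Fin Q → V := fun i ν =>
      ((n i).1 • (F (uint i ν)).1 + (n i).2 • (F (uint i ν)).2)
        + ((n i).1 • (F (uext i ν)).1 + (n i).2 • (F (uext i ν)).2)
        + α • uint i ν - α • uext i ν with hTdef
    -- scalar expansion of the update
    have hexp : (inner ℝ (ubar1 - us) ns : ℝ) =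
        (∑ i, (w i * ∑ ν, ω ν * (inner ℝ (uint i ν - us) ns : ℝ)
          - c * (l i * ∑ ν, ω ν * (inner ℝ (T i ν) ns : ℝ))))
        + (1 - ∑ i, w i) * (inner ℝ (ustarK - us) ns : ℝ) := by
      have hBS : (inner ℝ (∑ i, l i • ∑ ν, ω ν • T i ν) ns : ℝ)
          = ∑ i, l i * ∑ ν, ω ν * (inner ℝ (T i ν) ns : ℝ) := by
        rw [sum_inner]
        refine Finset.sum_congr rfl fun i _ => ?_
        rw [real_inner_smul_left, sum_inner]
        congr 1
        exact Finset.sum_congr rfl fun ν _ => real_inner_smul_left _ _ _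
      have hub : (inner ℝ (ubar - us) ns : ℝ)
          = ∑ i, w i * ∑ ν, ω ν * (inner ℝ (uint i ν - us) ns : ℝ)
            + (1 - ∑ i, w i) * (inner ℝ (ustarK - us) ns : ℝ) := by
        rw [hdecomp]
        simp only [inner_sub_left, inner_add_left, sum_inner, real_inner_smul_left,
          mul_sub, Finset.sum_sub_distrib, ← Finset.sum_mul, hωsum, one_mul, sub_mul]
        ring
      have hsplit : ubar1 - us = (ubar - us) - c • (∑ i, l i • ∑ ν, ω ν • T i ν) := by
        rw [hupdate, sub_right_comm]
      rw [hsplit, inner_sub_left, real_inner_smul_left, hub, hBS]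
      simp only [Finset.mul_sum, Finset.sum_sub_distrib]
      ring
    -- per-point inequality
    have key : ∀ i ν, 2 * c * l i * ((ζ us).1 * (n i).1 + (ζ us).2 * (n i).2) ≤
        w i * (inner ℝ (uint i ν - us) ns : ℝ) - c * (l i * (inner ℝ (T i ν) ns : ℝ)) := by
      intro i ν
      have hD : (0:ℝ) ≤ inner ℝ (uint i ν - us) ns := hint i ν us hus
      have hE : (0:ℝ) ≤ inner ℝ (uext i ν - us) ns := hext i ν us hus
      have hX := hwLF (uint i ν) (hint i ν) (n i) (hnunit i) us hus
      have hY := hwLF (uext i ν) (hext i ν) (n i) (hnunit i) us hus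
      have hTin : (inner ℝ (T i ν) ns : ℝ) =
          (inner ℝ ((n i).1 • (F (uint i ν)).1 + (n i).2 • (F (uint i ν)).2) ns : ℝ)
          + (inner ℝ ((n i).1 • (F (uext i ν)).1 + (n i).2 • (F (uext i ν)).2) ns : ℝ)
          + α * (inner ℝ (uint i ν - us) ns : ℝ) - α * (inner ℝ (uext i ν - us) ns : ℝ) := by
        simp only [hTdef]
        simp only [inner_sub_left, inner_add_left, real_inner_smul_left]
        ring
      have hclpos : 0 < c * l i := mul_pos hcpos (hl i)
      have hcfl : 2 * α * c * l i ≤ w i := by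
        have h1 := mul_le_mul_of_nonneg_right (hCFL i) (hl i).le
        rw [div_mul_cancel₀ _ (hl i).ne'] at h1
        calc 2 * α * c * l i = α * Δt / A * l i := by rw [hc]; field_simp
          _ ≤ w i := h1
      rw [hTin]
      nlinarith [mul_le_mul_of_nonneg_left hX hclpos.le,
        mul_le_mul_of_nonneg_left hY hclpos.le,
        mul_nonneg (sub_nonneg.mpr hcfl) hD]
    -- sum of the boundary terms vanishes
    have hzero : ∑ i, 2 * c * l i * ((ζ us).1 * (n i).1 + (ζ us).2 * (n i).2) = 0 := by
      have h1 : ∑ i, l i * (n i).1 = 0 := by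
        have := congrArg Prod.fst hn
        simpa [Prod.fst_sum] using this
      have h2 : ∑ i, l i * (n i).2 = 0 := by
        have := congrArg Prod.snd hn
        simpa [Prod.snd_sum] using this
      have : ∑ i, 2 * c * l i * ((ζ us).1 * (n i).1 + (ζ us).2 * (n i).2)
          = 2 * c * ((ζ us).1 * ∑ i, l i * (n i).1 + (ζ us).2 * ∑ i, l i * (n i).2) := by
        rw [Finset.mul_sum, Finset.mul_sum, ← Finset.sum_add_distrib, Finset.mul_sum]
        exact Finset.sum_congr rfl fun i _ => by ring
      rw [this, h1, h2]; ring
    rw [hexp]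
    have hmain : ∑ i, 2 * c * l i * ((ζ us).1 * (n i).1 + (ζ us).2 * (n i).2) ≤
        ∑ i, (w i * ∑ ν, ω ν * (inner ℝ (uint i ν - us) ns : ℝ)
          - c * (l i * ∑ ν, ω ν * (inner ℝ (T i ν) ns : ℝ))) := by
      apply Finset.sum_le_sum
      intro i _
      have : w i * ∑ ν, ω ν * (inner ℝ (uint i ν - us) ns : ℝ)
          - c * (l i * ∑ ν, ω ν * (inner ℝ (T i ν) ns : ℝ))
          = ∑ ν, ω ν * (w i * (inner ℝ (uint i ν - us) ns : ℝ)
              - c * (l i * (inner ℝ (T i ν) ns : ℝ))) := by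
        simp only [mul_sub, Finset.sum_sub_distrib, Finset.mul_sum]
        congr 1 <;> exact Finset.sum_congr rfl fun ν _ => by ring
      rw [this]
      calc 2 * c * l i * ((ζ us).1 * (n i).1 + (ζ us).2 * (n i).2)
          = ∑ ν, ω ν * (2 * c * l i * ((ζ us).1 * (n i).1 + (ζ us).2 * (n i).2)) := by
            rw [← Finset.sum_mul, hωsum, one_mul]
        _ ≤ _ := Finset.sum_le_sum fun ν _ =>
            mul_le_mul_of_nonneg_left (key i ν) (hω ν).le
    have hstar' : 0 ≤ (1 - ∑ i, w i) * (inner ℝ (ustarK - us) ns : ℝ) :=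
      mul_nonneg (by linarith) (hstar us hus)
    linarith [hmain, hzero.ge.trans hmain]
  exact ⟨main, main⟩
end
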